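/- For every ε ∈ ℝ: (a) for j ∈ {1,2}, the pull-back of the Volterra lattice flow under the Miura map 𝐌_j(ε) : ℳ𝒱 → 𝒱 coincides with the modified Volterra lattice MVL(ε) (i.e. D𝐌_j(ε)(y,z)·F_{MVL(ε)}(y,z) = f_{VL}(𝐌_j(ε)(y,z)) for all (y,z)), and 𝐌_j(ε) is a Poisson map from ℳ𝒱 equipped with the bracket {·,·}_{23}^{ℳ𝒱} to 𝒱 equipped with the bracket {·,·}_2^𝒱 + ε{·,·}_3^𝒱; (b) for j ∈ {1,2}, the pull-back of the flow MTL(ε) under the Miura map M_j(ε) : ℳ𝒱 → ℳ𝒯 coincides with MVL(ε), and M_j(ε) is a Poisson map from (ℳ𝒱, {·,·}_{23}^{ℳ𝒱}) to (ℳ𝒯, {·,·}_{23}^{ℳ𝒯}). -/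

import Mathlib

open scoped BigOperators

/-- Index set for the periodic phase space `ℝ^{2N}`: `Sum.inl k` indexes the first
family of coordinates and `Sum.inr k` the second family, `k ∈ ℤ/Nℤ`. -/
abbrev Idx (N : ℕ) : Type := (ZMod N) ⊕ (ZMod N)

/-- The phase space `ℝ^{2N}`. -/
abbrev Phase (N : ℕ) : Type := Idx N → ℝ

/-- First family of coordinates. -/
def c1 {N : ℕ} (x : Phase N) (k : ZMod N) : ℝ := x (Sum.inl k)

/-- Second family of coordinates. -/
def c2 {N : ℕ} (x : Phase N) (k : ZMod N) : ℝ := x (Sum.inr k)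

/-- A structure matrix on `Phase N`. -/
abbrev SM (N : ℕ) : Type := Phase N → Idx N → Idx N → ℝ

/-- Partial derivative of `F` at `x` in the `i`-th coordinate direction. -/
noncomputable def pderiv {N : ℕ} [NeZero N] (i : Idx N) (F : Phase N → ℝ)
    (x : Phase N) : ℝ :=
  fderiv ℝ F x (Pi.single i 1)

/-- The bracket of two functions associated with a structure matrix `J`:
`{F,G}(x) = ∑_{i,j} ∂_i F(x) · J_{ij}(x) · ∂_j G(x)`. -/
noncomputable def bracket {N : ℕ} [NeZero N] (J : SM N) (F G : Phase N → ℝ)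
    (x : Phase N) : ℝ :=
  ∑ i : Idx N, ∑ j : Idx N, pderiv i F x * J x i j * pderiv j G x

/-- The Jacobi identity for `J` holds at every point satisfying `P`. -/
def JacobiOn {N : ℕ} [NeZero N] (J : SM N) (P : Phase N → Prop) : Prop :=
  ∀ F G H : Phase N → ℝ, ContDiff ℝ (⊤ : ℕ∞) F → ContDiff ℝ (⊤ : ℕ∞) G →
    ContDiff ℝ (⊤ : ℕ∞) H → ∀ x : Phase N, P x →
      bracket J (bracket J F G) H x + bracket J (bracket J G H) F x +
        bracket J (bracket J H F) G x = 0

/-- `J` defines a Poisson bracket: the Jacobi identity holds everywhere. -/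
def IsPoisson {N : ℕ} [NeZero N] (J : SM N) : Prop :=
  JacobiOn J fun _ => True

/-- `f(x) = J(x)∇H(x)`: the vector field `f` is Hamiltonian at `x` with respect
to the structure matrix `J`, with Hamilton function `H`. -/
def HamAt {N : ℕ} [NeZero N] (J : SM N) (f : Phase N → Phase N)
    (H : Phase N → ℝ) (x : Phase N) : Prop :=
  ∀ i : Idx N, f x i = ∑ j : Idx N, J x i j * pderiv j H x

/-- `Dφ(x)·J(x)·Dφ(x)ᵀ = J'(φ(x))`: `φ` is a Poisson map at `x` from the
structure matrix `J` to the structure matrix `J'`. -/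
def PoissonMapAt {N : ℕ} [NeZero N] (φ : Phase N → Phase N) (J J' : SM N)
    (x : Phase N) : Prop :=
  ∀ i j : Idx N,
    (∑ k : Idx N, ∑ l : Idx N,
      pderiv k (fun y => φ y i) x * J x k l * pderiv l (fun y => φ y j) x)
      = J' (φ x) i j

/-- `Dφ(x)·f(x) = g(φ(x))`: the vector field `f` is the pull-back of the vector
field `g` under `φ`, at the point `x`. -/
def PullbackAt {N : ℕ} [NeZero N] (φ : Phase N → Phase N)
    (f g : Phase N → Phase N) (x : Phase N) : Prop :=
  ∀ i : Idx N, (∑ k : Idx N, pderiv k (fun y => φ y i) x * f x k) = g (φ x) i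

/-- The modified Toda lattice vector field `MTL(ε)`:
`ṗ_k = (1 + εp_k)(q_k - q_{k-1})`, `q̇_k = q_k(p_{k+1} - p_k)`,
with coordinates `p_k = c1 x k`, `q_k = c2 x k`. -/
noncomputable def mtlF (ε : ℝ) {N : ℕ} (x : Phase N) : Phase N := fun i =>
  match i with
  | Sum.inl k => (1 + ε * c1 x k) * (c2 x k - c2 x (k - 1))
  | Sum.inr k => c2 x k * (c1 x (k + 1) - c1 x k)

/-- Structure matrix `J₂₃` on `ℳ𝒯`. -/
noncomputable def JMT23 (ε : ℝ) {N : ℕ} (x : Phase N) : Idx N → Idx N → ℝ := fun i₁ i₂ =>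
  match i₁, i₂ with
  | Sum.inl j, Sum.inr k =>
      if j = k then -(c2 x k * (c1 x k + ε * c2 x k) * (1 + ε * c1 x k))
      else if j = k + 1 then
        c2 x k * (c1 x (k + 1) + ε * c2 x k) * (1 + ε * c1 x (k + 1))
      else 0
  | Sum.inr k, Sum.inl j =>
      if j = k then c2 x k * (c1 x k + ε * c2 x k) * (1 + ε * c1 x k)
      else if j = k + 1 then
        -(c2 x k * (c1 x (k + 1) + ε * c2 x k) * (1 + ε * c1 x (k + 1)))
      else 0
  | Sum.inl j, Sum.inl l =>
      if l = j + 1 then -(c2 x j * (1 + ε * c1 x j) * (1 + ε * c1 x (j + 1)))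
      else if j = l + 1 then c2 x l * (1 + ε * c1 x l) * (1 + ε * c1 x (l + 1))
      else 0
  | Sum.inr j, Sum.inr l =>
      if l = j + 1 then -(c2 x j * c2 x (j + 1) * (1 + ε * c1 x (j + 1)))
      else if j = l + 1 then c2 x l * c2 x (l + 1) * (1 + ε * c1 x (l + 1))
      else 0

/-- The Volterra lattice vector field: `u̇_k = u_k(v_k - v_{k-1})`,
`v̇_k = v_k(u_{k+1} - u_k)`, with coordinates `u_k = c1 x k`, `v_k = c2 x k`. -/
noncomputable def vlF {N : ℕ} (x : Phase N) : Phase N := fun i =>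
  match i with
  | Sum.inl k => c1 x k * (c2 x k - c2 x (k - 1))
  | Sum.inr k => c2 x k * (c1 x (k + 1) - c1 x k)

/-- Quadratic Volterra structure matrix: `{u_k,v_k} = -u_k v_k`,
`{v_k,u_{k+1}} = -v_k u_{k+1}`. -/
noncomputable def JV2 {N : ℕ} (x : Phase N) : Idx N → Idx N → ℝ := fun i₁ i₂ =>
  match i₁, i₂ with
  | Sum.inl j, Sum.inr k =>
      if j = k then -(c1 x k * c2 x k)
      else if j = k + 1 then c2 x k * c1 x (k + 1) else 0
  | Sum.inr k, Sum.inl j =>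
      if j = k then c1 x k * c2 x k
      else if j = k + 1 then -(c2 x k * c1 x (k + 1)) else 0
  | _, _ => 0

/-- Cubic Volterra structure matrix. -/
noncomputable def JV3 {N : ℕ} (x : Phase N) : Idx N → Idx N → ℝ := fun i₁ i₂ =>
  match i₁, i₂ with
  | Sum.inl j, Sum.inr k =>
      if j = k then -(c1 x k * c2 x k * (c1 x k + c2 x k))
      else if j = k + 1 then c2 x k * c1 x (k + 1) * (c2 x k + c1 x (k + 1)) else 0
  | Sum.inr k, Sum.inl j =>
      if j = k then c1 x k * c2 x k * (c1 x k + c2 x k)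
      else if j = k + 1 then -(c2 x k * c1 x (k + 1) * (c2 x k + c1 x (k + 1))) else 0
  | Sum.inl j, Sum.inl l =>
      if l = j + 1 then -(c1 x j * c2 x j * c1 x (j + 1))
      else if j = l + 1 then c1 x l * c2 x l * c1 x (l + 1) else 0
  | Sum.inr j, Sum.inr l =>
      if l = j + 1 then -(c2 x j * c1 x (j + 1) * c2 x (j + 1))
      else if j = l + 1 then c2 x l * c1 x (l + 1) * c2 x (l + 1) else 0

/-- The modified Volterra lattice vector field `MVL(ε)`:
`ẏ_k = y_k(1+εy_k)(z_k - z_{k-1})`, `ż_k = z_k(1+εz_k)(y_{k+1} - y_k)`,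
with coordinates `y_k = c1 x k`, `z_k = c2 x k`. -/
noncomputable def mvlF (ε : ℝ) {N : ℕ} (x : Phase N) : Phase N := fun i =>
  match i with
  | Sum.inl k => c1 x k * (1 + ε * c1 x k) * (c2 x k - c2 x (k - 1))
  | Sum.inr k => c2 x k * (1 + ε * c2 x k) * (c1 x (k + 1) - c1 x k)

/-- Structure matrix `J₂₃` on `ℳ𝒱`: `{y_k,z_k} = -y_k z_k(1+εy_k)(1+εz_k)`,
`{z_k,y_{k+1}} = -z_k y_{k+1}(1+εz_k)(1+εy_{k+1})`. -/
noncomputable def JMV23 (ε : ℝ) {N : ℕ} (x : Phase N) : Idx N → Idx N → ℝ := fun i₁ i₂ =>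
  match i₁, i₂ with
  | Sum.inl j, Sum.inr k =>
      if j = k then -(c1 x k * c2 x k * (1 + ε * c1 x k) * (1 + ε * c2 x k))
      else if j = k + 1 then
        c2 x k * c1 x (k + 1) * (1 + ε * c2 x k) * (1 + ε * c1 x (k + 1))
      else 0
  | Sum.inr k, Sum.inl j =>
      if j = k then c1 x k * c2 x k * (1 + ε * c1 x k) * (1 + ε * c2 x k)
      else if j = k + 1 then
        -(c2 x k * c1 x (k + 1) * (1 + ε * c2 x k) * (1 + ε * c1 x (k + 1)))
      else 0
  | _, _ => 0

/-- Miura map `𝐌₁(ε) : ℳ𝒱 → 𝒱`: `u_k = y_k(1+εz_{k-1})`, `v_k = z_k(1+εy_k)`. -/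
noncomputable def bMV1 (ε : ℝ) {N : ℕ} (x : Phase N) : Phase N := fun i =>
  match i with
  | Sum.inl k => c1 x k * (1 + ε * c2 x (k - 1))
  | Sum.inr k => c2 x k * (1 + ε * c1 x k)

/-- Miura map `𝐌₂(ε) : ℳ𝒱 → 𝒱`: `u_k = y_k(1+εz_k)`, `v_k = z_k(1+εy_{k+1})`. -/
noncomputable def bMV2 (ε : ℝ) {N : ℕ} (x : Phase N) : Phase N := fun i =>
  match i with
  | Sum.inl k => c1 x k * (1 + ε * c2 x k)
  | Sum.inr k => c2 x k * (1 + ε * c1 x (k + 1))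

/-- Miura map `M₁(ε) : ℳ𝒱 → ℳ𝒯`: `p_k = y_k + z_{k-1} + εy_k z_{k-1}`, `q_k = y_k z_k`. -/
noncomputable def mMV1 (ε : ℝ) {N : ℕ} (x : Phase N) : Phase N := fun i =>
  match i with
  | Sum.inl k => c1 x k + c2 x (k - 1) + ε * c1 x k * c2 x (k - 1)
  | Sum.inr k => c1 x k * c2 x k

/-- Miura map `M₂(ε) : ℳ𝒱 → ℳ𝒯`: `p_k = y_k + z_k + εy_k z_k`, `q_k = y_{k+1} z_k`. -/
noncomputable def mMV2 (ε : ℝ) {N : ℕ} (x : Phase N) : Phase N := fun i =>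
  match i with
  | Sum.inl k => c1 x k + c2 x k + ε * c1 x k * c2 x k
  | Sum.inr k => c1 x (k + 1) * c2 x k


/-!
Every component of each of the four Miura maps has the form `α y_a + β y_b + δ y_a y_b`,
so each row of its Jacobian has at most two nonzero entries. The pull-back identity
`Dφ · F_MVL = g ∘ φ` (g = VL or MTL) is then a two-term identity per component, and the
Poisson identity `Dφ · J₂₃ · Dφᵀ = J' ∘ φ` a four-term identity per pair of components.
All structure-matrix entries involved sit at index pairs `(a, b)` with `b - a ∈ {-1, 0, 1}`;
as `N ≥ 3` these three offsets are distinct in `ℤ/Nℤ`, and splitting on them leaves ring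
identities in `ℝ`.
-/

section SingleSum

variable {ι : Type*} [Fintype ι] [DecidableEq ι] (a b c d : ι) (A B C D : ℝ)

lemma sum_single_add_single_mul (v : ι → ℝ) :
    ∑ k, (Pi.single a A + Pi.single b B : ι → ℝ) k * v k = A * v a + B * v b := by
  simp [add_mul, Finset.sum_add_distrib, Pi.single_apply]

lemma sum_sum_single_add_single_mul_mul (J : ι → ι → ℝ) :
    ∑ k, ∑ l, (Pi.single a A + Pi.single b B : ι → ℝ) k * J k l *
        (Pi.single c C + Pi.single d D : ι → ℝ) l
      = A * C * J a c + A * D * J a d + B * C * J b c + B * D * J b d := by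
  simp only [Pi.add_apply, Pi.single_apply, add_mul, ite_mul, zero_mul, mul_add, mul_ite, mul_zero,
    Finset.sum_add_distrib, Finset.sum_ite_eq', Finset.mem_univ, ↓reduceIte]
  ring

end SingleSum

section Offset

variable {R : Type*} [AddGroupWithOne R]

lemma one_ne_zero_of_two_ne_zero (h2 : (2 : R) ≠ 0) : (1 : R) ≠ 0 := fun h =>
  h2 (by rw [← one_add_one_eq_two, h, add_zero])

lemma add_one_add_one_ne_self (h2 : (2 : R) ≠ 0) (a : R) : a + 1 + 1 ≠ a := by
  rwa [add_assoc, one_add_one_eq_two, Ne, add_eq_left]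

@[elab_as_elim]
lemma offset_induction {P : R → R → Prop} (a b : R) (diag : ∀ a, P a a)
    (succ : ∀ a, P a (a + 1)) (pred : ∀ b, P (b + 1) b)
    (far : ∀ a b, a ≠ b → b ≠ a + 1 → a ≠ b + 1 → P a b) : P a b := by
  by_cases hab : a = b
  · exact hab ▸ diag a
  by_cases hs : b = a + 1
  · exact hs ▸ succ a
  by_cases hp : a = b + 1
  · exact hp ▸ pred b
  exact far a b hab hs hp

end Offset

lemma ZMod.two_ne_zero_of_two_lt {N : ℕ} (hN : 2 < N) : (2 : ZMod N) ≠ 0 := by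
  have h : ((2 : ℕ) : ZMod N) ≠ 0 := by
    rw [Ne, ZMod.natCast_eq_zero_iff]
    exact fun hdvd => absurd (Nat.le_of_dvd two_pos hdvd) (by omega)
  exact_mod_cast h

section Miura

variable {N : ℕ} [NeZero N] (ε : ℝ)

lemma pderiv_eq_single_add_single (α β δ : ℝ) (a b : Idx N) {F : Phase N → ℝ}
    (hF : ∀ y, F y = α * y a + β * y b + δ * (y a * y b)) (x : Phase N) (k : Idx N) :
    pderiv k F x = (Pi.single a (α + δ * x b) + Pi.single b (β + δ * x a) : Phase N) k := by
  have hproj (c : Idx N) := hasFDerivAt_apply (𝕜 := ℝ) c x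
  have hD : HasFDerivAt (fun y : Phase N => α * y a + β * y b + δ * (y a * y b)) _ x :=
    (((hproj a).const_mul α).add ((hproj b).const_mul β)).add
      (((hproj a).mul (hproj b)).const_mul δ)
  rw [show F = _ from funext hF, pderiv, hD.fderiv]
  rcases eq_or_ne k a with rfl | ha <;> rcases eq_or_ne k b with rfl | hb
  · simp only [smul_add, add_apply, smul_apply, ContinuousLinearMap.proj_apply, Pi.single_eq_same,
      smul_eq_mul, mul_one, Pi.add_apply]
    ring
  all_goals simp [*]

variable (x : Phase N) (j : ZMod N) (k : Idx N)

lemma pderiv_bMV1_inl : pderiv k (fun y => bMV1 ε y (.inl j)) x =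
    (Pi.single (.inl j) (1 + ε * x (.inr (j - 1))) +
      Pi.single (.inr (j - 1)) (ε * x (.inl j)) : Phase N) k := by
  rw [pderiv_eq_single_add_single 1 0 ε (.inl j) (.inr (j - 1))
    (fun y => by simp only [bMV1, c1, c2]; ring)]
  simp only [zero_add]

lemma pderiv_bMV1_inr : pderiv k (fun y => bMV1 ε y (.inr j)) x =
    (Pi.single (.inl j) (ε * x (.inr j)) +
      Pi.single (.inr j) (1 + ε * x (.inl j)) : Phase N) k := by
  rw [pderiv_eq_single_add_single 0 1 ε (.inl j) (.inr j)
    (fun y => by simp only [bMV1, c1, c2]; ring)]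
  simp only [zero_add]

lemma pderiv_bMV2_inl : pderiv k (fun y => bMV2 ε y (.inl j)) x =
    (Pi.single (.inl j) (1 + ε * x (.inr j)) +
      Pi.single (.inr j) (ε * x (.inl j)) : Phase N) k := by
  rw [pderiv_eq_single_add_single 1 0 ε (.inl j) (.inr j)
    (fun y => by simp only [bMV2, c1, c2]; ring)]
  simp only [zero_add]

lemma pderiv_bMV2_inr : pderiv k (fun y => bMV2 ε y (.inr j)) x =
    (Pi.single (.inl (j + 1)) (ε * x (.inr j)) +
      Pi.single (.inr j) (1 + ε * x (.inl (j + 1))) : Phase N) k := by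
  rw [pderiv_eq_single_add_single 0 1 ε (.inl (j + 1)) (.inr j)
    (fun y => by simp only [bMV2, c1, c2]; ring)]
  simp only [zero_add]

lemma pderiv_mMV1_inl : pderiv k (fun y => mMV1 ε y (.inl j)) x =
    (Pi.single (.inl j) (1 + ε * x (.inr (j - 1))) +
      Pi.single (.inr (j - 1)) (1 + ε * x (.inl j)) : Phase N) k :=
  pderiv_eq_single_add_single 1 1 ε (.inl j) (.inr (j - 1))
    (fun y => by simp only [mMV1, c1, c2]; ring)
    x k

lemma pderiv_mMV1_inr : pderiv k (fun y => mMV1 ε y (.inr j)) x =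
    (Pi.single (.inl j) (x (.inr j)) + Pi.single (.inr j) (x (.inl j)) : Phase N) k := by
  rw [pderiv_eq_single_add_single 0 0 1 (.inl j) (.inr j)
    (fun y => by simp only [mMV1, c1, c2]; ring)]
  simp only [zero_add, one_mul]

lemma pderiv_mMV2_inl : pderiv k (fun y => mMV2 ε y (.inl j)) x =
    (Pi.single (.inl j) (1 + ε * x (.inr j)) +
      Pi.single (.inr j) (1 + ε * x (.inl j)) : Phase N) k :=
  pderiv_eq_single_add_single 1 1 ε (.inl j) (.inr j)
    (fun y => by simp only [mMV2, c1, c2]; ring)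
    x k

lemma pderiv_mMV2_inr : pderiv k (fun y => mMV2 ε y (.inr j)) x =
    (Pi.single (.inl (j + 1)) (x (.inr j)) +
      Pi.single (.inr j) (x (.inl (j + 1))) : Phase N) k := by
  rw [pderiv_eq_single_add_single 0 0 1 (.inl (j + 1)) (.inr j)
    (fun y => by simp only [mMV2, c1, c2]; ring)]
  simp only [zero_add, one_mul]

lemma pullbackAt_bMV1 : PullbackAt (bMV1 ε) (mvlF ε) vlF x := by
  rintro (j | j) <;>
  simp only [pderiv_bMV1_inl, pderiv_bMV1_inr, sum_single_add_single_mul] <;>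
  simp only [mvlF, vlF, bMV1, c1, c2, sub_add_cancel, add_sub_cancel_right] <;>
  ring

lemma pullbackAt_bMV2 : PullbackAt (bMV2 ε) (mvlF ε) vlF x := by
  rintro (j | j) <;>
  simp only [pderiv_bMV2_inl, pderiv_bMV2_inr, sum_single_add_single_mul] <;>
  simp only [mvlF, vlF, bMV2, c1, c2, sub_add_cancel, add_sub_cancel_right] <;>
  ring

lemma pullbackAt_mMV1 : PullbackAt (mMV1 ε) (mvlF ε) (mtlF ε) x := by
  rintro (j | j) <;>
  simp only [pderiv_mMV1_inl, pderiv_mMV1_inr, sum_single_add_single_mul] <;>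
  simp only [mvlF, mtlF, mMV1, c1, c2, sub_add_cancel, add_sub_cancel_right] <;>
  ring

lemma pullbackAt_mMV2 : PullbackAt (mMV2 ε) (mvlF ε) (mtlF ε) x := by
  rintro (j | j) <;>
  simp only [pderiv_mMV2_inl, pderiv_mMV2_inr, sum_single_add_single_mul] <;>
  simp only [mvlF, mtlF, mMV2, c1, c2, sub_add_cancel, add_sub_cancel_right] <;>
  ring

lemma poissonMapAt_bMV1 (h2 : (2 : ZMod N) ≠ 0) :
    PoissonMapAt (bMV1 ε) (JMV23 ε) (fun y i j => JV2 y i j + ε * JV3 y i j) x := by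
  rintro (a | a) (b | b) <;>
  simp only [pderiv_bMV1_inl, pderiv_bMV1_inr, sum_sum_single_add_single_mul_mul] <;>
  simp only [JMV23, JV2, JV3, bMV1, c1, c2, sub_add_cancel, eq_sub_iff_add_eq] <;>
  induction a, b using offset_induction <;>
  simp only [*, Ne.symm, ne_eq, not_false_eq_true, ↓reduceIte, add_sub_cancel_right, left_eq_add,
    add_eq_left, one_ne_zero_of_two_ne_zero h2, add_one_add_one_ne_self h2] <;>
  ring

lemma poissonMapAt_bMV2 (h2 : (2 : ZMod N) ≠ 0) :
    PoissonMapAt (bMV2 ε) (JMV23 ε) (fun y i j => JV2 y i j + ε * JV3 y i j) x := by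
  rintro (a | a) (b | b) <;>
  simp only [pderiv_bMV2_inl, pderiv_bMV2_inr, sum_sum_single_add_single_mul_mul] <;>
  simp only [JMV23, JV2, JV3, bMV2, c1, c2] <;>
  induction a, b using offset_induction <;>
  simp only [*, Ne.symm, ne_eq, not_false_eq_true, ↓reduceIte, add_left_inj, left_eq_add,
    add_eq_left, one_ne_zero_of_two_ne_zero h2, add_one_add_one_ne_self h2] <;>
  ring

lemma poissonMapAt_mMV1 (h2 : (2 : ZMod N) ≠ 0) :
    PoissonMapAt (mMV1 ε) (JMV23 ε) (JMT23 ε) x := by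
  rintro (a | a) (b | b) <;>
  simp only [pderiv_mMV1_inl, pderiv_mMV1_inr, sum_sum_single_add_single_mul_mul] <;>
  simp only [JMV23, JMT23, mMV1, c1, c2, sub_add_cancel, eq_sub_iff_add_eq] <;>
  induction a, b using offset_induction <;>
  simp only [*, Ne.symm, ne_eq, not_false_eq_true, ↓reduceIte, add_sub_cancel_right, left_eq_add,
    add_eq_left, one_ne_zero_of_two_ne_zero h2, add_one_add_one_ne_self h2] <;>
  ring

lemma poissonMapAt_mMV2 (h2 : (2 : ZMod N) ≠ 0) :
    PoissonMapAt (mMV2 ε) (JMV23 ε) (JMT23 ε) x := by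
  rintro (a | a) (b | b) <;>
  simp only [pderiv_mMV2_inl, pderiv_mMV2_inr, sum_sum_single_add_single_mul_mul] <;>
  simp only [JMV23, JMT23, mMV2, c1, c2] <;>
  induction a, b using offset_induction <;>
  simp only [*, Ne.symm, ne_eq, not_false_eq_true, ↓reduceIte, add_left_inj, left_eq_add,
    add_eq_left, one_ne_zero_of_two_ne_zero h2, add_one_add_one_ne_self h2] <;>
  ring

end Miura

/-- (a) the pull-back of the Volterra flow under `𝐌₁(ε), 𝐌₂(ε)`
coincides with `MVL(ε)`, and these maps are Poisson from `{·,·}₂₃` to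
`{·,·}₂ + ε{·,·}₃`; (b) the pull-back of `MTL(ε)` under `M₁(ε), M₂(ε)` coincides
with `MVL(ε)`, and these maps are Poisson for the corresponding `{·,·}₂₃`. -/
theorem stmt14 (N : ℕ) [NeZero N] (hN : 5 ≤ N) (ε : ℝ) :
    (∀ x : Phase N, PullbackAt (bMV1 ε) (mvlF ε) vlF x) ∧
    (∀ x : Phase N, PullbackAt (bMV2 ε) (mvlF ε) vlF x) ∧
    (∀ x : Phase N, PoissonMapAt (bMV1 ε) (JMV23 ε)
      (fun y i j => JV2 y i j + ε * JV3 y i j) x) ∧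
    (∀ x : Phase N, PoissonMapAt (bMV2 ε) (JMV23 ε)
      (fun y i j => JV2 y i j + ε * JV3 y i j) x) ∧
    (∀ x : Phase N, PullbackAt (mMV1 ε) (mvlF ε) (mtlF ε) x) ∧
    (∀ x : Phase N, PullbackAt (mMV2 ε) (mvlF ε) (mtlF ε) x) ∧
    (∀ x : Phase N, PoissonMapAt (mMV1 ε) (JMV23 ε) (JMT23 ε) x) ∧
    (∀ x : Phase N, PoissonMapAt (mMV2 ε) (JMV23 ε) (JMT23 ε) x) := by
  have h2 : (2 : ZMod N) ≠ 0 := ZMod.two_ne_zero_of_two_lt (by omega)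
  exact ⟨pullbackAt_bMV1 ε, pullbackAt_bMV2 ε,
    fun x => poissonMapAt_bMV1 ε x h2, fun x => poissonMapAt_bMV2 ε x h2,
    pullbackAt_mMV1 ε, pullbackAt_mMV2 ε,
    fun x => poissonMapAt_mMV1 ε x h2, fun x => poissonMapAt_mMV2 ε x h2⟩
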